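/- arXiv:1906.00506 — 2 statements merged into one kernel-verified Lean document; each statement's English description precedes it below -/
import Mathlib

section
/- Under the same assumptions, with M := ∇²f(x*)^{-1/2}, one has ‖M y − M⁻¹ s‖ / ‖M⁻¹ s‖ ≤ (L̃/μ) · max{‖z − x*‖, ‖z' − x*‖}. In particular, if max{‖z − x*‖, ‖z' − x*‖} < μ/(3L̃), then ‖M y − M⁻¹ s‖ ≤ (1/3)‖M⁻¹ s‖. -/
/-! The mean value inequality, applied to `∇f − H` with `H = ∇²f(x*) = R²`, gives
`‖y − H s‖ ≤ L̃ · max{‖z − x*‖, ‖z' − x*‖} · ‖s‖`. Since `M (H s) = R s`, the error to bound is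
`M (y − H s)`; strong convexity gives `√μ ‖v‖ ≤ ‖R v‖`, so `M` shrinks norms by `1/√μ` and
`‖s‖ ≤ ‖R s‖ / √μ`, which together yield the factor `L̃/μ`. -/

open scoped RealInnerProductSpace

theorem ContDiff.differentiable_gradient {F : Type*} [NormedAddCommGroup F]
    [InnerProductSpace ℝ F] [CompleteSpace F] {f : F → ℝ} (hf : ContDiff ℝ 2 f) :
    Differentiable ℝ (gradient f) :=
  ((InnerProductSpace.toDual ℝ F).symm.contDiff.comp
    (hf.fderiv_right (m := 1) (by norm_num))).differentiable one_ne_zero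

theorem norm_image_sub_sub_fderiv_le_of_fderiv_lipschitzAt {E F : Type*}
    [NormedAddCommGroup E] [NormedSpace ℝ E] [NormedAddCommGroup F] [NormedSpace ℝ F]
    {g : E → F} {L : ℝ} {x₀ : E} (hg : Differentiable ℝ g) (hL : 0 ≤ L)
    (hLip : ∀ x, ‖fderiv ℝ g x - fderiv ℝ g x₀‖ ≤ L * ‖x - x₀‖) (z z' : E) :
    ‖g z' - g z - fderiv ℝ g x₀ (z' - z)‖ ≤ L * max ‖z - x₀‖ ‖z' - x₀‖ * ‖z' - z‖ := by
  refine (convex_closedBall x₀ (max ‖z - x₀‖ ‖z' - x₀‖)).norm_image_sub_le_of_norm_fderiv_le'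
    (fun x _ => hg x) (fun x hx => (hLip x).trans ?_)
    (mem_closedBall_iff_norm.2 (le_max_left _ _)) (mem_closedBall_iff_norm.2 (le_max_right _ _))
  exact mul_le_mul_of_nonneg_left (mem_closedBall_iff_norm.1 hx) hL

namespace IsSelfAdjoint

variable {E : Type*} [NormedAddCommGroup E] [InnerProductSpace ℝ E] [CompleteSpace E]
  {R M : E →L[ℝ] E} {μ : ℝ}

theorem sqrt_mul_norm_le_norm_apply (hR : IsSelfAdjoint R)
    (hμ : ∀ v, μ * ‖v‖ ^ 2 ≤ ⟪(R * R) v, v⟫) (v : E) : √μ * ‖v‖ ≤ ‖R v‖ := by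
  have hsq : ⟪(R * R) v, v⟫ = ‖R v‖ ^ 2 :=
    (hR.isSymmetric (R v) v).trans (real_inner_self_eq_norm_sq _)
  calc √μ * ‖v‖ = √(μ * ‖v‖ ^ 2) := by
        rw [Real.sqrt_mul' μ (sq_nonneg _), Real.sqrt_sq (norm_nonneg v)]
    _ ≤ √(‖R v‖ ^ 2) := Real.sqrt_le_sqrt (hsq ▸ hμ v)
    _ = ‖R v‖ := Real.sqrt_sq (norm_nonneg _)

theorem norm_inv_apply_sub_apply_le (hR : IsSelfAdjoint R) (hMR : M * R = 1) (hRM : R * M = 1)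
    (hμpos : 0 < μ) (hμ : ∀ v, μ * ‖v‖ ^ 2 ≤ ⟪(R * R) v, v⟫) {ε : ℝ} (hε : 0 ≤ ε) {y s : E}
    (hy : ‖y - (R * R) s‖ ≤ ε * ‖s‖) : ‖M y - R s‖ ≤ ε / μ * ‖R s‖ := by
  have hR' := hR.sqrt_mul_norm_le_norm_apply hμ
  have hsqrt : 0 < √μ := Real.sqrt_pos.2 hμpos
  have hM (w : E) : √μ * ‖M w‖ ≤ ‖w‖ := by
    simpa only [← mul_apply_eq_comp, hRM, one_apply_eq_self] using hR' (M w)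
  have hsub : M y - R s = M (y - (R * R) s) := by
    rw [map_sub, ← mul_apply_eq_comp, ← mul_assoc, hMR, one_mul]
  calc ‖M y - R s‖ = ‖M (y - (R * R) s)‖ := by rw [hsub]
    _ ≤ ‖y - (R * R) s‖ / √μ := (le_div_iff₀' hsqrt).2 (hM _)
    _ ≤ ε * ‖s‖ / √μ := by gcongr
    _ ≤ ε * (‖R s‖ / √μ) / √μ := by gcongr; exact (le_div_iff₀' hsqrt).2 (hR' s)
    _ = ε / μ * ‖R s‖ := by
        rw [mul_div_assoc', div_div, Real.mul_self_sqrt hμpos.le, mul_div_right_comm]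

end IsSelfAdjoint

theorem weighted_secant_bound_general (p : ℕ)
    (f : EuclideanSpace ℝ (Fin p) → ℝ) (μ Lt : ℝ) (hμ : 0 < μ) (hLt : 0 < Lt)
    (hf : ContDiff ℝ 2 f)
    (hsc : ∀ x v : EuclideanSpace ℝ (Fin p),
      μ * ‖v‖ ^ 2 ≤ ⟪fderiv ℝ (gradient f) x v, v⟫)
    (hLip : ∀ x y : EuclideanSpace ℝ (Fin p),
      ‖fderiv ℝ (gradient f) x - fderiv ℝ (gradient f) y‖ ≤ Lt * ‖x - y‖)
    (xstar z z' : EuclideanSpace ℝ (Fin p))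
    (R M : EuclideanSpace ℝ (Fin p) →L[ℝ] EuclideanSpace ℝ (Fin p))
    (hRsa : IsSelfAdjoint R)
    (hRsq : R * R = fderiv ℝ (gradient f) xstar)
    (hMR : M * R = 1) (hRM : R * M = 1) :
    ‖M (gradient f z' - gradient f z) - R (z' - z)‖ / ‖R (z' - z)‖
        ≤ (Lt / μ) * max ‖z - xstar‖ ‖z' - xstar‖ ∧
      (max ‖z - xstar‖ ‖z' - xstar‖ < μ / (3 * Lt) →
        ‖M (gradient f z' - gradient f z) - R (z' - z)‖
          ≤ (1 / 3) * ‖R (z' - z)‖) := by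
  set D := max ‖z - xstar‖ ‖z' - xstar‖
  have hD : 0 ≤ D := (norm_nonneg _).trans (le_max_left _ _)
  have hsecant : ‖gradient f z' - gradient f z - (R * R) (z' - z)‖ ≤ Lt * D * ‖z' - z‖ :=
    hRsq ▸ norm_image_sub_sub_fderiv_le_of_fderiv_lipschitzAt hf.differentiable_gradient
      hLt.le (fun x => hLip x xstar) z z'
  have hcoercive (v : EuclideanSpace ℝ (Fin p)) : μ * ‖v‖ ^ 2 ≤ ⟪(R * R) v, v⟫ :=
    hRsq ▸ hsc xstar v
  have hweighted := hRsa.norm_inv_apply_sub_apply_le hMR hRM hμ hcoercive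
    (mul_nonneg hLt.le hD) hsecant
  refine ⟨div_le_of_le_mul₀ (norm_nonneg _) (by positivity) ?_, fun hsmall => ?_⟩
  · rwa [mul_div_right_comm] at hweighted
  · refine hweighted.trans (mul_le_mul_of_nonneg_right ?_ (norm_nonneg _))
    rw [lt_div_iff₀ (by positivity)] at hsmall
    rw [div_le_iff₀ hμ]
    linarith

/-- With `M = ∇²f(x*)^{-1/2}` (inverse of the positive square root `R`),
`‖M y − M⁻¹ s‖ / ‖M⁻¹ s‖ ≤ (L̃/μ) max{‖z − x*‖, ‖z' − x*‖}`; in particular if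
`max{‖z − x*‖, ‖z' − x*‖} < μ/(3L̃)` then `‖M y − M⁻¹ s‖ ≤ (1/3)‖M⁻¹ s‖`. -/
theorem weighted_secant_bound (p : ℕ)
    (f : EuclideanSpace ℝ (Fin p) → ℝ) (μ Lt : ℝ) (hμ : 0 < μ) (hLt : 0 < Lt)
    (hf : ContDiff ℝ 2 f)
    (hsc : ∀ x v : EuclideanSpace ℝ (Fin p),
      μ * ‖v‖ ^ 2 ≤ ⟪fderiv ℝ (gradient f) x v, v⟫)
    (hLip : ∀ x y : EuclideanSpace ℝ (Fin p),
      ‖fderiv ℝ (gradient f) x - fderiv ℝ (gradient f) y‖ ≤ Lt * ‖x - y‖)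
    (xstar z z' : EuclideanSpace ℝ (Fin p)) (hs : z' - z ≠ 0)
    (R M : EuclideanSpace ℝ (Fin p) →L[ℝ] EuclideanSpace ℝ (Fin p))
    (hRsa : IsSelfAdjoint R)
    (hRpos : ∀ v : EuclideanSpace ℝ (Fin p), 0 ≤ ⟪R v, v⟫)
    (hRsq : R * R = fderiv ℝ (gradient f) xstar)
    (hMR : M * R = 1) (hRM : R * M = 1) :
    ‖M (gradient f z' - gradient f z) - R (z' - z)‖ / ‖R (z' - z)‖
        ≤ (Lt / μ) * max ‖z - xstar‖ ‖z' - xstar‖ ∧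
      (max ‖z - xstar‖ ‖z' - xstar‖ < μ / (3 * Lt) →
        ‖M (gradient f z' - gradient f z) - R (z' - z)‖
          ≤ (1 / 3) * ‖R (z' - z)‖) :=
  weighted_secant_bound_general p f μ Lt hμ hLt hf hsc hLip xstar z z' R M hRsa hRsq hMR hRM
end

section
/- Suppose B₁,…,Bₙ are symmetric p×p matrices, H₁,…,Hₙ are symmetric positive definite matrices with ‖((1/n)∑Hᵢ)⁻¹‖ ≤ γ, and ‖Bᵢ − Hᵢ‖ ≤ ηδ for all i, with ηδγ(1+r) ≤ r for some r ∈ (0,1). Then (1/n)∑Bᵢ is invertible and ‖((1/n)∑Bᵢ)⁻¹‖ ≤ (1+r)γ. -/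
open scoped RealInnerProductSpace

/-!
Banach's perturbation lemma: writing `B̄ = A (1 - x)` with `x = A⁻¹ (A - B̄)`, where `A` and `B̄`
are the averages of the `Hᵢ` and of the `Bᵢ`, the averaged bound `‖A - B̄‖ ≤ ηδ` gives
`‖x‖ ≤ γηδ ≤ r / (1 + r) < 1`, so `1 - x` is inverted by its Neumann series and
`‖B̄⁻¹‖ ≤ ‖A⁻¹‖ / (1 - ‖x‖) ≤ (1 + r) γ`.
-/

section NormedRing

variable {R : Type*} [NormedRing R] [HasSummableGeomSeries R]

-- `‖1‖ ≤ 1` rather than `NormOneClass`: operators on the zero space (`p = 0`) have `‖1‖ = 0`.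
theorem norm_inverse_one_sub_le (h1 : ‖(1 : R)‖ ≤ 1) {x : R} (hx : ‖x‖ < 1) :
    ‖Ring.inverse (1 - x)‖ ≤ (1 - ‖x‖)⁻¹ := by
  rw [← geom_series_eq_inverse x hx]
  linarith [tsum_geometric_le_of_norm_lt_one x hx]

theorem isUnit_and_norm_inverse_le_of_norm_inverse_mul_norm_sub_lt (h1 : ‖(1 : R)‖ ≤ 1)
    {a b : R} (ha : IsUnit a) (hab : ‖Ring.inverse a‖ * ‖a - b‖ < 1) :
    IsUnit b ∧ ‖Ring.inverse b‖ ≤ ‖Ring.inverse a‖ / (1 - ‖Ring.inverse a‖ * ‖a - b‖) := by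
  set x := Ring.inverse a * (a - b)
  have hx_le : ‖x‖ ≤ ‖Ring.inverse a‖ * ‖a - b‖ := norm_mul_le _ _
  have hx : ‖x‖ < 1 := hx_le.trans_lt hab
  have hb : b = a * (1 - x) := by
    rw [mul_sub, mul_one, Ring.mul_inverse_cancel_left a _ ha, sub_sub_cancel]
  refine ⟨hb ▸ ha.mul (isUnit_one_sub_of_norm_lt_one hx), ?_⟩
  have hinv : Ring.inverse b = Ring.inverse (1 - x) * Ring.inverse a := by
    rw [hb, Ring.inverse_mul (.inl ha)]
  rw [hinv, div_eq_inv_mul]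
  calc ‖Ring.inverse (1 - x) * Ring.inverse a‖
      ≤ ‖Ring.inverse (1 - x)‖ * ‖Ring.inverse a‖ := norm_mul_le _ _
    _ ≤ (1 - ‖x‖)⁻¹ * ‖Ring.inverse a‖ :=
      mul_le_mul_of_nonneg_right (norm_inverse_one_sub_le h1 hx) (norm_nonneg _)
    _ ≤ (1 - ‖Ring.inverse a‖ * ‖a - b‖)⁻¹ * ‖Ring.inverse a‖ := by
      gcongr

theorem isUnit_and_norm_inverse_le_of_norm_sub_le (h1 : ‖(1 : R)‖ ≤ 1)
    {a b : R} {γ ε r : ℝ} (ha : IsUnit a) (hγ : ‖Ring.inverse a‖ ≤ γ) (hε : ‖a - b‖ ≤ ε)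
    (hr : 0 < r) (hsmall : ε * γ * (1 + r) ≤ r) :
    IsUnit b ∧ ‖Ring.inverse b‖ ≤ (1 + r) * γ := by
  have hprod : ‖Ring.inverse a‖ * ‖a - b‖ ≤ γ * ε :=
    mul_le_mul hγ hε (norm_nonneg _) ((norm_nonneg _).trans hγ)
  -- `γε ≤ r / (1 + r)`, i.e. `1 - γε ≥ 1 / (1 + r)`
  have hgap : 1 ≤ (1 + r) * (1 - ‖Ring.inverse a‖ * ‖a - b‖) := by nlinarith
  have hpos : 0 < 1 - ‖Ring.inverse a‖ * ‖a - b‖ := by nlinarith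
  obtain ⟨hb, hbound⟩ :=
    isUnit_and_norm_inverse_le_of_norm_inverse_mul_norm_sub_lt h1 ha (by linarith)
  refine ⟨hb, hbound.trans ?_⟩
  rw [div_le_iff₀ hpos]
  nlinarith [norm_nonneg (Ring.inverse a)]

end NormedRing

theorem norm_average_le {E : Type*} [SeminormedAddCommGroup E] [NormedSpace ℝ E] {n : ℕ}
    (f : Fin n → E) {C : ℝ} (hC : 0 ≤ C) (hf : ∀ i, ‖f i‖ ≤ C) :
    ‖(1 / (n : ℝ)) • ∑ i, f i‖ ≤ C := by
  rcases Nat.eq_zero_or_pos n with rfl | hn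
  · simpa using hC
  have hsum : ‖∑ i, f i‖ ≤ n * C := by
    simpa using norm_sum_le_of_le Finset.univ fun i _ => hf i
  rw [norm_smul, Real.norm_of_nonneg (by positivity), one_div, inv_mul_le_iff₀ (by positivity)]
  exact hsum

theorem average_hessian_approx_invertible_general (p n : ℕ)
    (B H : Fin n → (EuclideanSpace ℝ (Fin p) →L[ℝ] EuclideanSpace ℝ (Fin p)))
    (γ η δ r : ℝ) (hη : 0 < η) (hδ : 0 < δ)
    (hr0 : 0 < r)
    (hHunit : IsUnit ((1 / (n : ℝ)) • ∑ i, H i))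
    (hHinv : ‖Ring.inverse ((1 / (n : ℝ)) • ∑ i, H i)‖ ≤ γ)
    (hBH : ∀ i, ‖B i - H i‖ ≤ η * δ)
    (hsmall : η * δ * γ * (1 + r) ≤ r) :
    IsUnit ((1 / (n : ℝ)) • ∑ i, B i) ∧
      ‖Ring.inverse ((1 / (n : ℝ)) • ∑ i, B i)‖ ≤ (1 + r) * γ := by
  have hdist : ‖(1 / (n : ℝ)) • ∑ i, H i - (1 / (n : ℝ)) • ∑ i, B i‖ ≤ η * δ := by
    have h := norm_average_le (fun i => H i - B i) (by positivity) fun i =>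
      norm_sub_rev (B i) (H i) ▸ hBH i
    rwa [Finset.sum_sub_distrib, smul_sub] at h
  exact isUnit_and_norm_inverse_le_of_norm_sub_le ContinuousLinearMap.norm_id_le hHunit hHinv
    hdist hr0 hsmall

/-- If `‖((1/n)∑Hᵢ)⁻¹‖ ≤ γ` for symmetric positive definite `Hᵢ`, and symmetric `Bᵢ`
satisfy `‖Bᵢ − Hᵢ‖ ≤ ηδ` with `ηδγ(1+r) ≤ r`, `r ∈ (0,1)`, then `(1/n)∑Bᵢ` is
invertible with `‖((1/n)∑Bᵢ)⁻¹‖ ≤ (1+r)γ`. -/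
theorem average_hessian_approx_invertible (p n : ℕ) (hn : 0 < n)
    (B H : Fin n → (EuclideanSpace ℝ (Fin p) →L[ℝ] EuclideanSpace ℝ (Fin p)))
    (γ η δ r : ℝ) (hγ : 0 < γ) (hη : 0 < η) (hδ : 0 < δ)
    (hr0 : 0 < r) (hr1 : r < 1)
    (hBsym : ∀ i, IsSelfAdjoint (B i))
    (hHsym : ∀ i, IsSelfAdjoint (H i))
    (hHpos : ∀ i, ∀ x : EuclideanSpace ℝ (Fin p), x ≠ 0 → 0 < ⟪(H i) x, x⟫)
    (hHunit : IsUnit ((1 / (n : ℝ)) • ∑ i, H i))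
    (hHinv : ‖Ring.inverse ((1 / (n : ℝ)) • ∑ i, H i)‖ ≤ γ)
    (hBH : ∀ i, ‖B i - H i‖ ≤ η * δ)
    (hsmall : η * δ * γ * (1 + r) ≤ r) :
    IsUnit ((1 / (n : ℝ)) • ∑ i, B i) ∧
      ‖Ring.inverse ((1 / (n : ℝ)) • ∑ i, B i)‖ ≤ (1 + r) * γ :=
  average_hessian_approx_invertible_general p n B H γ η δ r hη hδ hr0 hHunit hHinv hBH hsmall
end
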